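/- Let C be a (k,r,h) data-local maximally recoverable code with exactly two local groups (so k = 2r and n = 2r + 2 + h). Then the generalized Hamming weights of C are d_s = h + 1 + s for 1 ≤ s ≤ r, and d_s = h + 2 + s for r+1 ≤ s ≤ 2r. -/

import Mathlib

open Finset

/-- Coordinate index set of a `(k,r,h)` data-local code with `ℓ` local groups (see stmt 3). -/
abbrev DLIdx (ℓ r h : ℕ) : Type := (Fin ℓ × Fin r) ⊕ (Fin ℓ ⊕ Fin h)

/-- The support `S_i` of the `i`-th local group. -/
def dlGroup (ℓ r h : ℕ) (i : Fin ℓ) : Finset (DLIdx ℓ r h) :=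
  insert (Sum.inr (Sum.inl i))
    ((Finset.univ : Finset (Fin r)).image fun j => Sum.inl (i, j))

/-!
Bound the support of an `s`-dimensional subcode `D` from below by puncturing one coordinate in
each local group, chosen inside the support of `D` whenever the support meets that group. One
erasure per group is recovered by the local parities, so `D` keeps dimension `s` on the punctured
code, whose distance is `h + 1`; the generalized Singleton bound there leaves `h + s` support
coordinates besides the `g` punctured ones, `g` being the number of groups the support meets.
As `D` embeds into the message coordinates of these groups, `s ≤ g r`: so `g ≥ 1`, and `g = 2`
when `s > r`. Conversely, the messages supported on `s` coordinates spread over `g` groups with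
`s ≤ g r` form a subcode with support of size at most `h + s + g`.
-/

lemma hammingNorm_funLeft_subtypeVal {ι F : Type*} [Field F] [DecidableEq F] (E : Finset ι)
    (c : ι → F) :
    hammingNorm (LinearMap.funLeft F F (Subtype.val : E → ι) c) = #{j ∈ E | c j ≠ 0} := by
  rw [hammingNorm, card_filter, card_filter, ← sum_attach E]
  rfl

section CoordSupport

variable {ι F : Type*} [Fintype ι] [Field F]

open Classical in
noncomputable def coordSupport (D : Submodule F (ι → F)) : Finset ι :=
  {j | ∃ c ∈ D, c j ≠ 0}

lemma mem_coordSupport {D : Submodule F (ι → F)} {j : ι} :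
    j ∈ coordSupport D ↔ ∃ c ∈ D, c j ≠ 0 := by
  simp [coordSupport]

lemma ncard_setOf_exists_apply_ne_zero (D : Submodule F (ι → F)) :
    Set.ncard {j | ∃ c ∈ D, c j ≠ 0} = #(coordSupport D) := by
  rw [← Set.ncard_coe_finset]
  congr
  ext j
  simp [mem_coordSupport]

lemma apply_eq_zero_of_notMem_coordSupport {D : Submodule F (ι → F)} {c : ι → F} (hc : c ∈ D)
    {j : ι} (hj : j ∉ coordSupport D) : c j = 0 := by
  by_contra hcj
  exact hj (mem_coordSupport.2 ⟨c, hc, hcj⟩)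

lemma finrank_le_card_of_eq_zero_of_eqOn {D : Submodule F (ι → F)} (S : Finset ι)
    (hS : ∀ c ∈ D, (∀ j ∈ S, c j = 0) → c = 0) : Module.finrank F D ≤ #S := by
  have hinj : Function.Injective ((LinearMap.funLeft F F ((↑) : S → ι)).comp D.subtype) := by
    rw [← LinearMap.ker_eq_bot, Submodule.eq_bot_iff]
    rintro ⟨c, hc⟩ hker
    ext1
    exact hS c hc fun j hj => congrFun hker ⟨j, hj⟩
  simpa using LinearMap.finrank_le_finrank_of_injective hinj

/-- Generalized Singleton bound `d_s ≥ d_1 + s - 1`: some nonzero vector of `D` vanishes on any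
`dim D - 1` coordinates of its support. -/
lemma add_finrank_le_card_coordSupport_inter [DecidableEq ι] [DecidableEq F]
    {D : Submodule F (ι → F)} (hD : 0 < Module.finrank F D) (E : Finset ι) {δ : ℕ}
    (hδ : ∀ c ∈ D, c ≠ 0 → δ + 1 ≤ #{j ∈ E | c j ≠ 0}) :
    δ + Module.finrank F D ≤ #(coordSupport D ∩ E) := by
  set S := coordSupport D ∩ E
  have hsub : ∀ c ∈ D, ∀ Z ⊆ S, (∀ j ∈ Z, c j = 0) → {j ∈ E | c j ≠ 0} ⊆ S \ Z := by
    intro c hc Z _ hZ j hj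
    rw [mem_filter] at hj
    refine mem_sdiff.2 ⟨mem_inter.2 ⟨mem_coordSupport.2 ⟨c, hc, hj.2⟩, hj.1⟩, fun hjZ => ?_⟩
    exact hj.2 (hZ j hjZ)
  have hS : Module.finrank F D ≤ #S := by
    refine finrank_le_card_of_eq_zero_of_eqOn S fun c hc hcS => by_contra fun hc0 => ?_
    have := (hδ c hc hc0).trans (card_le_card (hsub c hc S subset_rfl hcS))
    simp at this
  obtain ⟨Z, hZS, hZ⟩ := exists_subset_card_eq (show Module.finrank F D - 1 ≤ #S by omega)
  obtain ⟨c, hc, hcZ, hc0⟩ : ∃ c ∈ D, (∀ j ∈ Z, c j = 0) ∧ c ≠ 0 := by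
    by_contra! h
    have := finrank_le_card_of_eq_zero_of_eqOn Z h
    omega
  have := (hδ c hc hc0).trans (card_le_card (hsub c hc Z hZS hcZ))
  rw [card_sdiff_of_subset hZS] at this
  omega

end CoordSupport

section DataLocal

variable {ℓ r h : ℕ}

lemma mem_dlGroup_iff {i : Fin ℓ} {x : DLIdx ℓ r h} :
    x ∈ dlGroup ℓ r h i ↔ x = Sum.inr (Sum.inl i) ∨ ∃ j, x = Sum.inl (i, j) := by
  simp [dlGroup, eq_comm]

lemma eq_of_mem_dlGroup {i i' : Fin ℓ} {x : DLIdx ℓ r h}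
    (hx : x ∈ dlGroup ℓ r h i) (hx' : x ∈ dlGroup ℓ r h i') : i = i' := by
  rcases mem_dlGroup_iff.1 hx with rfl | ⟨j, rfl⟩ <;>
    rcases mem_dlGroup_iff.1 hx' with h' | ⟨j', h'⟩ <;> simp_all

lemma injective_of_mem_dlGroup {e : Fin ℓ → DLIdx ℓ r h} (he : ∀ i, e i ∈ dlGroup ℓ r h i) :
    Function.Injective e :=
  fun i i' hii' => eq_of_mem_dlGroup (he i) (hii' ▸ he i')

lemma card_dlGroup (i : Fin ℓ) : #(dlGroup ℓ r h i) = r + 1 := by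
  rw [dlGroup, card_insert_of_notMem (by simp),
    card_image_of_injective _ (fun a b hab => by simpa using hab)]
  simp

lemma card_dlIdx : Fintype.card (DLIdx ℓ r h) = ℓ * r + ℓ + h := by
  simp [Fintype.card_sum]
  ring

variable {F : Type*} [Field F]

def IsSystematic {ι κ : Type*} (C : Submodule F (ι ⊕ κ → F)) : Prop :=
  ∀ x : ι → F, ∃! c : ι ⊕ κ → F, c ∈ C ∧ ∀ p, c (Sum.inl p) = x p

def HasLocalParities (C : Submodule F (DLIdx ℓ r h → F)) (a : Fin ℓ → Fin r → F) : Prop :=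
  ∀ c ∈ C, ∀ i : Fin ℓ, c (Sum.inr (Sum.inl i)) = ∑ j : Fin r, a i j * c (Sum.inl (i, j))

def HasPuncturedDistance [DecidableEq F] (C : Submodule F (DLIdx ℓ r h → F)) : Prop :=
  ∀ E : Finset (DLIdx ℓ r h), #E = ℓ * r + h → (∀ i, #(E ∩ dlGroup ℓ r h i) = r) →
    ∀ y ∈ C.map (LinearMap.funLeft F F (Subtype.val : E → DLIdx ℓ r h)),
      y ≠ 0 → h + 1 ≤ hammingNorm y

namespace IsSystematic

variable {ι κ : Type*} {C : Submodule F (ι ⊕ κ → F)}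

lemma eq_zero (hC : IsSystematic C) {c : ι ⊕ κ → F} (hc : c ∈ C)
    (h0 : ∀ p, c (Sum.inl p) = 0) : c = 0 :=
  (hC 0).unique ⟨hc, h0⟩ ⟨C.zero_mem, fun _ => rfl⟩

lemma exists_finrank_eq_card [Fintype ι] (hC : IsSystematic C) (M : Finset ι) :
    ∃ D ≤ C, Module.finrank F D = #M ∧ ∀ c ∈ D, ∀ p ∉ M, c (Sum.inl p) = 0 := by
  let msg : C →ₗ[F] ι → F := (LinearMap.funLeft F F Sum.inl).comp C.subtype
  have hmsg : Function.Bijective msg := by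
    refine ⟨fun c c' hcc' => Subtype.ext ?_, fun x => ?_⟩
    · exact (hC (msg c)).unique ⟨c.2, fun _ => rfl⟩ ⟨c'.2, fun p => (congrFun hcc' p).symm⟩
    · obtain ⟨c, ⟨hc, hcx⟩, -⟩ := hC x
      exact ⟨⟨c, hc⟩, funext hcx⟩
  let enc := LinearEquiv.ofBijective msg hmsg
  let f := C.subtype ∘ₗ enc.symm.toLinearMap ∘ₗ
    Function.ExtendByZero.linearMap F (Subtype.val : M → ι)
  have hf : Function.Injective f :=
    C.injective_subtype.comp <| enc.symm.injective.comp <|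
      Function.extend_injective Subtype.val_injective (0 : ι → F)
  refine ⟨LinearMap.range f, ?_, ?_, ?_⟩
  · rintro _ ⟨x, rfl⟩
    exact (enc.symm _).2
  · simp [LinearMap.finrank_range_of_inj hf]
  · rintro _ ⟨x, rfl⟩ p hp
    change (enc.symm (Function.extend Subtype.val x 0) : ι ⊕ κ → F) (Sum.inl p) = 0
    rw [show (enc.symm _ : ι ⊕ κ → F) (Sum.inl p) = Function.extend Subtype.val x 0 p from
      congrFun (enc.apply_symm_apply _) p]
    exact Function.extend_apply' _ _ _ (by rintro ⟨⟨q, hq⟩, rfl⟩; exact hp hq)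

end IsSystematic

namespace HasLocalParities

variable {C : Submodule F (DLIdx ℓ r h → F)} {a : Fin ℓ → Fin r → F}

lemma apply_parity_eq_zero (hloc : HasLocalParities C a) {c : DLIdx ℓ r h → F} (hc : c ∈ C)
    {i : Fin ℓ} (h0 : ∀ j, c (Sum.inl (i, j)) = 0) : c (Sum.inr (Sum.inl i)) = 0 := by
  simp [hloc c hc i, h0]

/-- The local parity check has all its coefficients nonzero, so it recovers any single erasure
in its group. -/
lemma apply_eq_zero_of_eqOn_erase (hloc : HasLocalParities C a) (ha : ∀ i j, a i j ≠ 0)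
    {c : DLIdx ℓ r h → F} (hc : c ∈ C) {i : Fin ℓ} {x : DLIdx ℓ r h} (hx : x ∈ dlGroup ℓ r h i)
    (h0 : ∀ y ∈ dlGroup ℓ r h i, y ≠ x → c y = 0) (j : Fin r) : c (Sum.inl (i, j)) = 0 := by
  have hmem : ∀ j, (Sum.inl (i, j) : DLIdx ℓ r h) ∈ dlGroup ℓ r h i :=
    fun j => mem_dlGroup_iff.2 (Or.inr ⟨j, rfl⟩)
  rcases mem_dlGroup_iff.1 hx with rfl | ⟨j₀, rfl⟩
  · exact h0 _ (hmem j) (by simp)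
  by_cases hj : j = j₀
  · subst hj
    have hpar := hloc c hc i
    rw [h0 _ (mem_dlGroup_iff.2 (Or.inl rfl)) (by simp),
      sum_eq_single j (fun j' _ hj' => by rw [h0 _ (hmem j') (by simpa), mul_zero]) (by simp)]
      at hpar
    exact (mul_eq_zero.1 hpar.symm).resolve_left (ha i j)
  · exact h0 _ (hmem j) (by simpa)

end HasLocalParities

lemma eq_zero_of_eq_zero_off_image {C : Submodule F (DLIdx ℓ r h → F)} {a : Fin ℓ → Fin r → F}
    (hsys : IsSystematic C) (hloc : HasLocalParities C a)
    (ha : ∀ i j, a i j ≠ 0) {e : Fin ℓ → DLIdx ℓ r h} (he : ∀ i, e i ∈ dlGroup ℓ r h i)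
    {c : DLIdx ℓ r h → F} (hc : c ∈ C) (h0 : ∀ j ∉ univ.image e, c j = 0) : c = 0 := by
  refine hsys.eq_zero hc fun ⟨i, j⟩ => hloc.apply_eq_zero_of_eqOn_erase ha hc (he i) ?_ j
  intro y hy hye
  refine h0 y fun hy' => hye ?_
  obtain ⟨i', -, rfl⟩ := mem_image.1 hy'
  rw [eq_of_mem_dlGroup (he i') hy]

lemma exists_finrank_eq_card_coordSupport_le {C : Submodule F (DLIdx ℓ r h → F)}
    {a : Fin ℓ → Fin r → F} (hsys : IsSystematic C) (hloc : HasLocalParities C a) {s g : ℕ}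
    (hg : g ≤ ℓ) (hs : s ≤ g * r) :
    ∃ D ≤ C, Module.finrank F D = s ∧ #(coordSupport D) ≤ h + s + g := by
  obtain ⟨G, -, hG⟩ := exists_subset_card_eq (s := (univ : Finset (Fin ℓ))) (by simpa using hg)
  obtain ⟨M, hMG, hM⟩ := exists_subset_card_eq (s := G ×ˢ (univ : Finset (Fin r)))
    (by simpa [hG] using hs)
  obtain ⟨D, hDC, hrank, hD0⟩ := hsys.exists_finrank_eq_card M
  refine ⟨D, hDC, hrank.trans hM, ?_⟩
  have hsub : coordSupport D ⊆
      (M.map .inl ∪ G.image (Sum.inr ∘ Sum.inl)) ∪ univ.image (Sum.inr ∘ Sum.inr) := by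
    intro x hx
    obtain ⟨c, hc, hcx⟩ := mem_coordSupport.1 hx
    rcases x with p | i | t
    · have hp : p ∈ M := by_contra fun hp => hcx (hD0 c hc p hp)
      simp [hp]
    · have hi : i ∈ G := by_contra fun hi => hcx <| hloc.apply_parity_eq_zero (hDC hc) fun j =>
        hD0 c hc _ fun hij => hi (mem_product.1 (hMG hij)).1
      simp [hi]
    · simp
  calc #(coordSupport D) ≤ _ := card_le_card hsub
    _ ≤ #M + #G + h := by
      refine (card_union_le _ _).trans (add_le_add ((card_union_le _ _).trans ?_) ?_)
      · exact add_le_add (card_map _).le card_image_le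
      · exact card_image_le.trans (by simp)
    _ = h + s + g := by simp [hM, hG]; omega

section LowerBound

variable [DecidableEq F] {C : Submodule F (DLIdx ℓ r h → F)} {a : Fin ℓ → Fin r → F}

/-- Puncturing `C` at a transversal `e` of the local groups leaves a code of distance `h + 1`
on which `D` still has full dimension. -/
lemma add_finrank_add_card_inter_image_le (hsys : IsSystematic C) (hloc : HasLocalParities C a)
    (ha : ∀ i j, a i j ≠ 0) (hpunct : HasPuncturedDistance C) {D : Submodule F (DLIdx ℓ r h → F)}
    (hDC : D ≤ C) (hD : 0 < Module.finrank F D) {e : Fin ℓ → DLIdx ℓ r h}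
    (he : ∀ i, e i ∈ dlGroup ℓ r h i) :
    h + Module.finrank F D + #(coordSupport D ∩ univ.image e) ≤ #(coordSupport D) := by
  set P := univ.image e
  have hPcard : #Pᶜ = ℓ * r + h := by
    rw [card_compl, card_image_of_injective _ (injective_of_mem_dlGroup he), card_dlIdx, card_univ,
      Fintype.card_fin]
    omega
  have hPgroup : ∀ i, #(Pᶜ ∩ dlGroup ℓ r h i) = r := by
    intro i
    have hErase : Pᶜ ∩ dlGroup ℓ r h i = (dlGroup ℓ r h i).erase (e i) := by
      ext x
      simp only [P, mem_inter, mem_compl, mem_image, mem_univ, true_and, mem_erase, not_exists]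
      constructor
      · rintro ⟨hx, hxi⟩
        exact ⟨fun hxe => hx i hxe.symm, hxi⟩
      · rintro ⟨hxe, hxi⟩
        refine ⟨fun i' hi' => hxe ?_, hxi⟩
        subst hi'
        rw [eq_of_mem_dlGroup (he i') hxi]
    rw [hErase, card_erase_of_mem (he i), card_dlGroup, Nat.add_sub_cancel]
  have hwt : ∀ c ∈ D, c ≠ 0 → h + 1 ≤ #{j ∈ Pᶜ | c j ≠ 0} := by
    intro c hc hc0
    rw [← hammingNorm_funLeft_subtypeVal]
    refine hpunct Pᶜ hPcard hPgroup _ (Submodule.mem_map_of_mem (hDC hc)) fun hpunct => hc0 ?_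
    exact eq_zero_of_eq_zero_off_image hsys hloc ha he (hDC hc) fun j hj =>
      congrFun hpunct ⟨j, mem_compl.2 hj⟩
  have hsplit := card_sdiff_add_card_inter (coordSupport D) P
  have := add_finrank_le_card_coordSupport_inter hD Pᶜ hwt
  rw [← sdiff_eq_inter_compl] at this
  omega

/-- Take the transversal inside the support wherever possible; `g` counts the local groups the
support meets, and `D` embeds into the message coordinates of those groups. -/
lemma exists_le_mul_and_add_le_card_coordSupport (hsys : IsSystematic C)
    (hloc : HasLocalParities C a) (ha : ∀ i j, a i j ≠ 0) (hpunct : HasPuncturedDistance C)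
    {D : Submodule F (DLIdx ℓ r h → F)} (hDC : D ≤ C) (hD : 0 < Module.finrank F D) :
    ∃ g ≤ ℓ, Module.finrank F D ≤ g * r ∧ h + Module.finrank F D + g ≤ #(coordSupport D) := by
  set G : Finset (Fin ℓ) := {i | ∃ x ∈ dlGroup ℓ r h i, x ∈ coordSupport D}
  have htrans : ∀ i, ∃ x ∈ dlGroup ℓ r h i, i ∈ G → x ∈ coordSupport D := by
    intro i
    by_cases hi : i ∈ G
    · obtain ⟨x, hx, hxD⟩ := (mem_filter.1 hi).2
      exact ⟨x, hx, fun _ => hxD⟩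
    · exact ⟨_, mem_dlGroup_iff.2 (Or.inl rfl), fun h => absurd h hi⟩
  choose e he heT using htrans
  refine ⟨#G, card_le_univ G |>.trans_eq (Fintype.card_fin ℓ), ?_, ?_⟩
  · calc Module.finrank F D ≤ #((G ×ˢ univ).map .inl) := by
          refine finrank_le_card_of_eq_zero_of_eqOn _ fun c hc h0 => hsys.eq_zero (hDC hc) ?_
          rintro ⟨i, j⟩
          by_cases hi : i ∈ G
          · exact h0 _ (by simp [hi])
          · refine apply_eq_zero_of_notMem_coordSupport hc fun hT => hi ?_
            exact mem_filter.2 ⟨mem_univ _, _, mem_dlGroup_iff.2 (Or.inr ⟨j, rfl⟩), hT⟩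
      _ = #G * r := by simp
  · have hGP : #G ≤ #(coordSupport D ∩ univ.image e) := by
      rw [← card_image_of_injective G (injective_of_mem_dlGroup he)]
      refine card_le_card (image_subset_iff.2 fun i hi => mem_inter.2 ⟨heT i hi, ?_⟩)
      exact mem_image_of_mem _ (mem_univ _)
    have := add_finrank_add_card_inter_image_le hsys hloc ha hpunct hDC hD he
    omega

end LowerBound

end DataLocal

theorem stmt_12_general (r h : ℕ)
    (F : Type) [Field F] [DecidableEq F]
    (C : Submodule F (DLIdx 2 r h → F))
    (hsys : ∀ x : Fin 2 × Fin r → F, ∃! c : DLIdx 2 r h → F,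
      c ∈ C ∧ ∀ p, c (Sum.inl p) = x p)
    (a : Fin 2 → Fin r → F) (ha : ∀ i j, a i j ≠ 0)
    (hloc : ∀ c ∈ C, ∀ i : Fin 2,
      c (Sum.inr (Sum.inl i)) = ∑ j : Fin r, a i j * c (Sum.inl (i, j)))
    (hmrc : ∀ E : Finset (DLIdx 2 r h), E.card = 2 * r + h →
      (∀ i : Fin 2, (E ∩ dlGroup 2 r h i).card = r) →
      Module.finrank F
          (C.map (LinearMap.funLeft F F (Subtype.val : ↥E → DLIdx 2 r h))) = 2 * r ∧
      ∀ y ∈ C.map (LinearMap.funLeft F F (Subtype.val : ↥E → DLIdx 2 r h)),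
        y ≠ 0 → h + 1 ≤ hammingNorm y)
    (d : ℕ → ℕ)
    (hd : ∀ s, 1 ≤ s → s ≤ 2 * r →
      IsLeast {w | ∃ D : Submodule F (DLIdx 2 r h → F), D ≤ C ∧ Module.finrank F D = s ∧
        Set.ncard {j : DLIdx 2 r h | ∃ c ∈ D, c j ≠ 0} = w} (d s)) :
    (∀ s, 1 ≤ s → s ≤ r → d s = h + 1 + s) ∧
    (∀ s, r + 1 ≤ s → s ≤ 2 * r → d s = h + 2 + s) := by
  have hpunct : HasPuncturedDistance C := fun E hE hEi => (hmrc E hE hEi).2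
  have hupper : ∀ s g, 1 ≤ s → s ≤ 2 * r → g ≤ 2 → s ≤ g * r → d s ≤ h + s + g := by
    intro s g hs1 hs2 hg hsg
    obtain ⟨D, hDC, hrank, hcard⟩ := exists_finrank_eq_card_coordSupport_le hsys hloc hg hsg
    refine ((hd s hs1 hs2).2 ⟨D, hDC, hrank, rfl⟩).trans ?_
    rwa [ncard_setOf_exists_apply_ne_zero]
  have hlower : ∀ s, 1 ≤ s → s ≤ 2 * r → ∃ g ≤ 2, s ≤ g * r ∧ h + s + g ≤ d s := by
    intro s hs1 hs2
    obtain ⟨D, hDC, rfl, hw⟩ := (hd s hs1 hs2).1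
    rw [← hw, ncard_setOf_exists_apply_ne_zero]
    exact exists_le_mul_and_add_le_card_coordSupport hsys hloc ha hpunct hDC hs1
  refine ⟨fun s hs1 hsr => ?_, fun s hs1 hs2 => ?_⟩
  · obtain ⟨g, hg, hsg, hle⟩ := hlower s hs1 (by omega)
    have := hupper s 1 hs1 (by omega) (by norm_num) (by simpa)
    interval_cases g <;> omega
  · obtain ⟨g, hg, hsg, hle⟩ := hlower s (by omega) hs2
    have := hupper s 2 (by omega) hs2 le_rfl hs2
    interval_cases g <;> omega

/-- the generalized Hamming weights of a `(k,r,h)` data-local MRC with two local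
groups (`k = 2r`, `n = 2r + 2 + h`) are `d_s = h + 1 + s` for `1 ≤ s ≤ r` and
`d_s = h + 2 + s` for `r + 1 ≤ s ≤ 2r`. -/
theorem stmt_12 (r h : ℕ) (hr : 0 < r)
    (F : Type) [Field F] [Fintype F] [DecidableEq F]
    (C : Submodule F (DLIdx 2 r h → F))
    (hsys : ∀ x : Fin 2 × Fin r → F, ∃! c : DLIdx 2 r h → F,
      c ∈ C ∧ ∀ p, c (Sum.inl p) = x p)
    (a : Fin 2 → Fin r → F) (ha : ∀ i j, a i j ≠ 0)
    (hloc : ∀ c ∈ C, ∀ i : Fin 2,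
      c (Sum.inr (Sum.inl i)) = ∑ j : Fin r, a i j * c (Sum.inl (i, j)))
    (hmrc : ∀ E : Finset (DLIdx 2 r h), E.card = 2 * r + h →
      (∀ i : Fin 2, (E ∩ dlGroup 2 r h i).card = r) →
      Module.finrank F
          (C.map (LinearMap.funLeft F F (Subtype.val : ↥E → DLIdx 2 r h))) = 2 * r ∧
      ∀ y ∈ C.map (LinearMap.funLeft F F (Subtype.val : ↥E → DLIdx 2 r h)),
        y ≠ 0 → h + 1 ≤ hammingNorm y)
    (d : ℕ → ℕ)
    (hd : ∀ s, 1 ≤ s → s ≤ 2 * r →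
      IsLeast {w | ∃ D : Submodule F (DLIdx 2 r h → F), D ≤ C ∧ Module.finrank F D = s ∧
        Set.ncard {j : DLIdx 2 r h | ∃ c ∈ D, c j ≠ 0} = w} (d s)) :
    (∀ s, 1 ≤ s → s ≤ r → d s = h + 1 + s) ∧
    (∀ s, r + 1 ≤ s → s ≤ 2 * r → d s = h + 2 + s) :=
  stmt_12_general r h F C hsys a ha hloc hmrc d hd
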